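/- arXiv:2402.03709 — 2 statements merged into one kernel-verified Lean document; each statement's English description precedes it below -/
import Mathlib

section
/- Let k₁, k₂ ∈ ℝ, γ₁ > 0, Θ₁ ∈ ℝ, and let e₁, e₂, e₃, γ : ℝ → ℝ² and Θ̂₁ : ℝ → ℝ be differentiable functions such that, for all t: the derivative of V₂ := (1/2)‖e₁‖² + (1/2)‖e₂‖² satisfies V₂'(t) = −k₁‖e₁(t)‖² − k₂‖e₂(t)‖² + ⟨e₂(t), e₃(t) + (Θ₁ − Θ̂₁(t)) γ(t)⟩, and the adaptation law Θ̂₁'(t) = γ₁ ⟨γ(t), e₂(t)⟩ holds. Then the augmented function 𝒱₂(t) := V₂(t) + (1/(2γ₁))(Θ₁ − Θ̂₁(t))² is differentiable with 𝒱₂'(t) = −k₁‖e₁(t)‖² − k₂‖e₂(t)‖² + ⟨e₂(t), e₃(t)⟩ for all t. -/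
open Real RealInnerProductSpace

theorem HasDerivAt.add_estimation_error_sq {V θhat : ℝ → ℝ} {V' g c Θ t : ℝ} (hc : c ≠ 0)
    (hV : HasDerivAt V V' t) (hθ : HasDerivAt θhat (c * g) t) :
    HasDerivAt (fun s => V s + (1 / (2 * c)) * (Θ - θhat s) ^ 2)
      (V' - (Θ - θhat t) * g) t := by
  refine (hV.fun_add (((hθ.const_sub Θ).fun_pow 2).const_mul (1 / (2 * c)))).congr_deriv ?_
  field_simp
  ring

theorem stmt_9_general (k₁ k₂ γ₁ Θ₁ : ℝ) (hγ₁ : 0 < γ₁)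
    (e₁ e₂ e₃ γ : ℝ → EuclideanSpace ℝ (Fin 2))
    (Θhat₁ : ℝ → ℝ)
    (he₁ : Differentiable ℝ e₁) (he₂ : Differentiable ℝ e₂)
    (hΘhat₁ : Differentiable ℝ Θhat₁)
    (V₂ : ℝ → ℝ)
    (hV₂ : ∀ t, V₂ t = (1 / 2) * ‖e₁ t‖ ^ 2 + (1 / 2) * ‖e₂ t‖ ^ 2)
    (hV₂' : ∀ t, deriv V₂ t = -k₁ * ‖e₁ t‖ ^ 2 - k₂ * ‖e₂ t‖ ^ 2 +
      ⟪e₂ t, e₃ t + (Θ₁ - Θhat₁ t) • γ t⟫)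
    (hadapt : ∀ t, deriv Θhat₁ t = γ₁ * ⟪γ t, e₂ t⟫)
    (𝒱₂ : ℝ → ℝ)
    (h𝒱₂ : ∀ t, 𝒱₂ t = V₂ t + (1 / (2 * γ₁)) * (Θ₁ - Θhat₁ t) ^ 2) :
    Differentiable ℝ 𝒱₂ ∧
    ∀ t : ℝ, deriv 𝒱₂ t = -k₁ * ‖e₁ t‖ ^ 2 - k₂ * ‖e₂ t‖ ^ 2 + ⟪e₂ t, e₃ t⟫ := by
  have hV₂_diff : Differentiable ℝ V₂ := by
    rw [funext hV₂]
    exact ((he₁.norm_sq (𝕜 := ℝ)).const_mul _).add ((he₂.norm_sq (𝕜 := ℝ)).const_mul _)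
  have h𝒱₂_deriv (t : ℝ) : HasDerivAt 𝒱₂
      (deriv V₂ t - (Θ₁ - Θhat₁ t) * ⟪γ t, e₂ t⟫) t := by
    rw [funext h𝒱₂]
    refine (hV₂_diff t).hasDerivAt.add_estimation_error_sq hγ₁.ne' ?_
    rw [← hadapt]
    exact (hΘhat₁ t).hasDerivAt
  refine ⟨fun t => (h𝒱₂_deriv t).differentiableAt, fun t => ?_⟩
  rw [(h𝒱₂_deriv t).deriv, hV₂', inner_add_right, real_inner_smul_right, real_inner_comm (γ t)]
  ring

/-- `Θ₁`-adaptation step: if `V₂' = −k₁‖e₁‖² − k₂‖e₂‖² + ⟨e₂, e₃ + (Θ₁ − Θ̂₁) γ⟩` and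
`Θ̂₁' = γ₁ ⟨γ, e₂⟩`, then `𝒱₂ := V₂ + (1/(2γ₁))(Θ₁ − Θ̂₁)²` is differentiable with
`𝒱₂' = −k₁‖e₁‖² − k₂‖e₂‖² + ⟨e₂, e₃⟩`. -/
theorem stmt_9 (k₁ k₂ γ₁ Θ₁ : ℝ) (hγ₁ : 0 < γ₁)
    (e₁ e₂ e₃ γ : ℝ → EuclideanSpace ℝ (Fin 2))
    (Θhat₁ : ℝ → ℝ)
    (he₁ : Differentiable ℝ e₁) (he₂ : Differentiable ℝ e₂)
    (he₃ : Differentiable ℝ e₃) (hγ : Differentiable ℝ γ)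
    (hΘhat₁ : Differentiable ℝ Θhat₁)
    (V₂ : ℝ → ℝ)
    (hV₂ : ∀ t, V₂ t = (1 / 2) * ‖e₁ t‖ ^ 2 + (1 / 2) * ‖e₂ t‖ ^ 2)
    (hV₂' : ∀ t, deriv V₂ t = -k₁ * ‖e₁ t‖ ^ 2 - k₂ * ‖e₂ t‖ ^ 2 +
      ⟪e₂ t, e₃ t + (Θ₁ - Θhat₁ t) • γ t⟫)
    (hadapt : ∀ t, deriv Θhat₁ t = γ₁ * ⟪γ t, e₂ t⟫)
    (𝒱₂ : ℝ → ℝ)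
    (h𝒱₂ : ∀ t, 𝒱₂ t = V₂ t + (1 / (2 * γ₁)) * (Θ₁ - Θhat₁ t) ^ 2) :
    Differentiable ℝ 𝒱₂ ∧
    ∀ t : ℝ, deriv 𝒱₂ t = -k₁ * ‖e₁ t‖ ^ 2 - k₂ * ‖e₂ t‖ ^ 2 + ⟪e₂ t, e₃ t⟫ :=
  stmt_9_general k₁ k₂ γ₁ Θ₁ hγ₁ e₁ e₂ e₃ γ Θhat₁ he₁ he₂ hΘhat₁ V₂ hV₂ hV₂' hadapt 𝒱₂ h𝒱₂
end

section
/- Let k₁, k₂, k₃, k₄ ∈ ℝ, γ₃ > 0, γ₄ > 0, Θ₁, Θ₂ ∈ ℝ, and let e₁, e₂, e₃, e₄, γ, h : ℝ → ℝ², c : ℝ → ℝ, and φ̂₁, Θ̂₂ : ℝ → ℝ be differentiable functions such that, for all t: the derivative of V₄ satisfies V₄'(t) = −k₁‖e₁(t)‖² − k₂‖e₂(t)‖² − k₃‖e₃(t)‖² − k₄‖e₄(t)‖² − c(t)⟨e₄(t), γ(t)⟩(φ̂₁(t) − Θ₁) − ⟨e₄(t), h(t)⟩(Θ̂₂(t)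 − Θ₂), and the adaptation laws φ̂₁'(t) = γ₃ c(t) ⟨γ(t), e₄(t)⟩ and Θ̂₂'(t) = γ₄ ⟨h(t), e₄(t)⟩ hold. Then 𝒱₄(t) := V₄(t) + (1/(2γ₃))(φ̂₁(t) − Θ₁)² + (1/(2γ₄))(Θ̂₂(t) − Θ₂)² is differentiable with 𝒱₄'(t) = −k₁‖e₁(t)‖² − k₂‖e₂(t)‖² − k₃‖e₃(t)‖² − k₄‖e₄(t)‖² for all t. -/
open Real RealInnerProductSpace

/-! Each adaptation law `θ̂' = γ g` makes the estimation-error term `(θ̂ - θ)² / (2γ)` have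
derivative `(θ̂ - θ) g`, which cancels exactly the corresponding uncertainty term in `V₄'`. -/

theorem HasDerivAt.one_div_two_mul_mul_sub_sq {f : ℝ → ℝ} {γ g a t : ℝ} (hγ : γ ≠ 0)
    (hf : HasDerivAt f (γ * g) t) :
    HasDerivAt (fun s => 1 / (2 * γ) * (f s - a) ^ 2) ((f t - a) * g) t := by
  refine (((hf.sub_const a).fun_pow 2).const_mul (1 / (2 * γ))).congr_deriv ?_
  field_simp
  norm_num

theorem stmt_12_general (k₁ k₂ k₃ k₄ γ₃ γ₄ Θ₁ Θ₂ : ℝ) (hγ₃ : 0 < γ₃) (hγ₄ : 0 < γ₄)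
    (e₁ e₂ e₃ e₄ γ h : ℝ → EuclideanSpace ℝ (Fin 2))
    (c : ℝ → ℝ) (φhat₁ Θhat₂ : ℝ → ℝ)
    (hφhat₁ : Differentiable ℝ φhat₁) (hΘhat₂ : Differentiable ℝ Θhat₂)
    (V₄ : ℝ → ℝ) (hV₄diff : Differentiable ℝ V₄)
    (hV₄' : ∀ t, deriv V₄ t =
      -k₁ * ‖e₁ t‖ ^ 2 - k₂ * ‖e₂ t‖ ^ 2 - k₃ * ‖e₃ t‖ ^ 2 - k₄ * ‖e₄ t‖ ^ 2
        - c t * ⟪e₄ t, γ t⟫ * (φhat₁ t - Θ₁)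
        - ⟪e₄ t, h t⟫ * (Θhat₂ t - Θ₂))
    (hadapt₁ : ∀ t, deriv φhat₁ t = γ₃ * c t * ⟪γ t, e₄ t⟫)
    (hadapt₂ : ∀ t, deriv Θhat₂ t = γ₄ * ⟪h t, e₄ t⟫)
    (𝒱₄ : ℝ → ℝ)
    (h𝒱₄ : ∀ t, 𝒱₄ t = V₄ t + (1 / (2 * γ₃)) * (φhat₁ t - Θ₁) ^ 2
      + (1 / (2 * γ₄)) * (Θhat₂ t - Θ₂) ^ 2) :
    Differentiable ℝ 𝒱₄ ∧
    ∀ t : ℝ, deriv 𝒱₄ t =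
      -k₁ * ‖e₁ t‖ ^ 2 - k₂ * ‖e₂ t‖ ^ 2 - k₃ * ‖e₃ t‖ ^ 2 - k₄ * ‖e₄ t‖ ^ 2 := by
  have hasDeriv : ∀ t, HasDerivAt 𝒱₄ (deriv V₄ t + (φhat₁ t - Θ₁) * (c t * ⟪γ t, e₄ t⟫)
      + (Θhat₂ t - Θ₂) * ⟪h t, e₄ t⟫) t := by
    intro t
    have hφ : HasDerivAt φhat₁ (γ₃ * (c t * ⟪γ t, e₄ t⟫)) t := by
      rw [← mul_assoc, ← hadapt₁]
      exact (hφhat₁ t).hasDerivAt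
    have hΘ : HasDerivAt Θhat₂ (γ₄ * ⟪h t, e₄ t⟫) t := hadapt₂ t ▸ (hΘhat₂ t).hasDerivAt
    rw [funext h𝒱₄]
    exact ((hV₄diff t).hasDerivAt.add (hφ.one_div_two_mul_mul_sub_sq hγ₃.ne')).add
      (hΘ.one_div_two_mul_mul_sub_sq hγ₄.ne')
  refine ⟨fun t => (hasDeriv t).differentiableAt, fun t => ?_⟩
  rw [(hasDeriv t).deriv, hV₄' t, real_inner_comm (γ t), real_inner_comm (h t)]
  ring

/-- `φ₁`- and `Θ₂`-adaptation step: if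
`V₄' = −Σᵢ kᵢ‖eᵢ‖² − c ⟨e₄, γ⟩(φ̂₁ − Θ₁) − ⟨e₄, h⟩(Θ̂₂ − Θ₂)` together with the
adaptation laws `φ̂₁' = γ₃ c ⟨γ, e₄⟩` and `Θ̂₂' = γ₄ ⟨h, e₄⟩`, then
`𝒱₄ := V₄ + (1/(2γ₃))(φ̂₁ − Θ₁)² + (1/(2γ₄))(Θ̂₂ − Θ₂)²` is differentiable with
`𝒱₄' = −k₁‖e₁‖² − k₂‖e₂‖² − k₃‖e₃‖² − k₄‖e₄‖²`. -/
theorem stmt_12 (k₁ k₂ k₃ k₄ γ₃ γ₄ Θ₁ Θ₂ : ℝ) (hγ₃ : 0 < γ₃) (hγ₄ : 0 < γ₄)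
    (e₁ e₂ e₃ e₄ γ h : ℝ → EuclideanSpace ℝ (Fin 2))
    (c : ℝ → ℝ) (φhat₁ Θhat₂ : ℝ → ℝ)
    (he₁ : Differentiable ℝ e₁) (he₂ : Differentiable ℝ e₂)
    (he₃ : Differentiable ℝ e₃) (he₄ : Differentiable ℝ e₄)
    (hγ : Differentiable ℝ γ) (hh : Differentiable ℝ h)
    (hc : Differentiable ℝ c)
    (hφhat₁ : Differentiable ℝ φhat₁) (hΘhat₂ : Differentiable ℝ Θhat₂)
    (V₄ : ℝ → ℝ) (hV₄diff : Differentiable ℝ V₄)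
    (hV₄' : ∀ t, deriv V₄ t =
      -k₁ * ‖e₁ t‖ ^ 2 - k₂ * ‖e₂ t‖ ^ 2 - k₃ * ‖e₃ t‖ ^ 2 - k₄ * ‖e₄ t‖ ^ 2
        - c t * ⟪e₄ t, γ t⟫ * (φhat₁ t - Θ₁)
        - ⟪e₄ t, h t⟫ * (Θhat₂ t - Θ₂))
    (hadapt₁ : ∀ t, deriv φhat₁ t = γ₃ * c t * ⟪γ t, e₄ t⟫)
    (hadapt₂ : ∀ t, deriv Θhat₂ t = γ₄ * ⟪h t, e₄ t⟫)
    (𝒱₄ : ℝ → ℝ)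
    (h𝒱₄ : ∀ t, 𝒱₄ t = V₄ t + (1 / (2 * γ₃)) * (φhat₁ t - Θ₁) ^ 2
      + (1 / (2 * γ₄)) * (Θhat₂ t - Θ₂) ^ 2) :
    Differentiable ℝ 𝒱₄ ∧
    ∀ t : ℝ, deriv 𝒱₄ t =
      -k₁ * ‖e₁ t‖ ^ 2 - k₂ * ‖e₂ t‖ ^ 2 - k₃ * ‖e₃ t‖ ^ 2 - k₄ * ‖e₄ t‖ ^ 2 :=
  stmt_12_general k₁ k₂ k₃ k₄ γ₃ γ₄ Θ₁ Θ₂ hγ₃ hγ₄ e₁ e₂ e₃ e₄ γ h c φhat₁ Θhat₂ hφhat₁ hΘhat₂ V₄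
    hV₄diff hV₄' hadapt₁ hadapt₂ 𝒱₄ h𝒱₄
end
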